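/- arXiv:2406.04831 — 4 statements merged into one kernel-verified Lean document; each statement's English description precedes it below -/
import Mathlib

section
/- Let W : ℝ^{d×d} → [0,∞] satisfy: (i) frame indifference W(RF)=W(F) for R ∈ SO(d); (ii) α dist²(F,SO(d)) ≤ W(F) for all F, and W(F) ≤ β dist²(F,SO(d)) when dist²(F,SO(d)) ≤ ρ; (iii) |W(I+G) − Q(G)| ≤ |G|² r(|G|) with r increasing and r(δ)→0 as δ→0, where Q is a quadratic form. Then Q satisfies α|sym G|² ≤ Q(G) ≤ β|sym G|² for all G ∈ ℝ^{d×d}. -/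
/-- Frobenius norm of a matrix. -/
noncomputable def frobNorm {d : ℕ} (A : Matrix (Fin d) (Fin d) ℝ) : ℝ :=
  Real.sqrt (∑ i, ∑ j, (A i j) ^ 2)

/-- Symmetric part of a matrix. -/
noncomputable def symMat {d : ℕ} (G : Matrix (Fin d) (Fin d) ℝ) : Matrix (Fin d) (Fin d) ℝ :=
  (1 / 2 : ℝ) • (G + G.transpose)

/-- The special orthogonal group `SO(d)` as a set of matrices. -/
def SOset (d : ℕ) : Set (Matrix (Fin d) (Fin d) ℝ) :=
  {R | R.transpose * R = 1 ∧ R.det = 1}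

/-- Frobenius distance of a matrix to `SO(d)`. -/
noncomputable def distSO {d : ℕ} (F : Matrix (Fin d) (Fin d) ℝ) : ℝ :=
  sInf ((fun R => frobNorm (F - R)) '' SOset d)

/-!
Along the ray `h ↦ 1 + h G`, the quadratic expansion gives `W (1 + h G) / h² → Q G`, while
`dist (1 + h G, SO(d)) / h → |sym G|`: from below because a rotation `R` has
`sym R = 1 + O(|1 - R|²)` and so can only absorb the skew part of `h G`, from above by comparing
with the rotation `exp (h (G - sym G))`. Dividing the two-sided bound on `W` by `h²` and letting
`h → 0⁺` gives the bounds on `Q`.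
-/

open Filter Topology

section QuadraticExpansion

variable {E : Type*} [NormedAddCommGroup E] [NormedSpace ℝ E]

theorem tendsto_div_sq_of_quadratic_expansion {f : E → ℝ} {Q : QuadraticForm ℝ E} {r : ℝ → ℝ}
    (hr : Tendsto r (𝓝[≥] 0) (𝓝 0)) (hf : ∀ v, |f v - Q v| ≤ ‖v‖ ^ 2 * r ‖v‖) (v : E) :
    Tendsto (fun h : ℝ => f (h • v) / h ^ 2) (𝓝[>] 0) (𝓝 (Q v)) := by
  have hscale : Tendsto (fun h : ℝ => h * ‖v‖) (𝓝[>] 0) (𝓝[≥] 0) := by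
    refine tendsto_nhdsWithin_iff.mpr ⟨?_, ?_⟩
    · exact tendsto_nhdsWithin_of_tendsto_nhds
        (Continuous.tendsto' (by fun_prop) 0 0 (zero_mul _))
    · filter_upwards [self_mem_nhdsWithin] with h hh using
        mul_nonneg (le_of_lt hh) (norm_nonneg v)
  have hbound : Tendsto (fun h : ℝ => ‖v‖ ^ 2 * r (h * ‖v‖)) (𝓝[>] 0) (𝓝 0) := by
    simpa using (hr.comp hscale).const_mul (‖v‖ ^ 2)
  rw [tendsto_iff_norm_sub_tendsto_zero]
  refine squeeze_zero' (Eventually.of_forall fun _ => norm_nonneg _) ?_ hbound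
  filter_upwards [self_mem_nhdsWithin] with h (hh : 0 < h)
  have hQ : Q (h • v) = h ^ 2 * Q v := by rw [QuadraticMap.map_smul, smul_eq_mul, sq]
  have key := hf (h • v)
  rw [norm_smul, Real.norm_eq_abs, abs_of_pos hh, hQ, mul_pow] at key
  rw [Real.norm_eq_abs, show f (h • v) / h ^ 2 - Q v = (f (h • v) - h ^ 2 * Q v) / h ^ 2 by
    field_simp, abs_div, abs_of_pos (pow_pos hh 2), div_le_iff₀ (pow_pos hh 2)]
  linarith

end QuadraticExpansion

section Frobenius

open scoped Matrix Matrix.Norms.Frobenius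
open NormedSpace

variable {d : ℕ}

theorem frobNorm_eq_norm (A : Matrix (Fin d) (Fin d) ℝ) : frobNorm A = ‖A‖ := by
  rw [frobNorm, Matrix.frobenius_norm_def, Real.sqrt_eq_rpow]
  simp only [Real.norm_eq_abs, Real.rpow_two, sq_abs]

theorem symMat_smul (c : ℝ) (A : Matrix (Fin d) (Fin d) ℝ) : symMat (c • A) = c • symMat A := by
  simp only [symMat, Matrix.transpose_smul, smul_add]
  module

theorem norm_symMat_le (A : Matrix (Fin d) (Fin d) ℝ) : ‖symMat A‖ ≤ ‖A‖ :=
  calc ‖symMat A‖ ≤ 1 / 2 * (‖A‖ + ‖Aᵀ‖) := by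
        rw [symMat, norm_smul, Real.norm_of_nonneg (by norm_num)]
        gcongr
        exact norm_add_le _ _
    _ = ‖A‖ := by rw [Matrix.frobenius_norm_transpose]; ring

/-- For orthogonal `R`, `1 - sym R = ½ (1 - R)(1 - R)ᵀ`. -/
theorem norm_one_sub_symMat_le {R : Matrix (Fin d) (Fin d) ℝ} (hR : Rᵀ * R = 1) :
    ‖1 - symMat R‖ ≤ ‖1 - R‖ ^ 2 / 2 := by
  have hRR : R * Rᵀ = 1 := mul_eq_one_comm.mp hR
  have key : 1 - symMat R = (1 / 2 : ℝ) • ((1 - R) * (1 - R)ᵀ) := by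
    have expand : (1 - R) * (1 - R)ᵀ = 1 - R - Rᵀ + R * Rᵀ := by
      simp only [Matrix.transpose_sub, Matrix.transpose_one]
      noncomm_ring
    rw [expand, hRR, symMat]
    module
  calc ‖1 - symMat R‖ ≤ 1 / 2 * (‖1 - R‖ * ‖(1 - R)ᵀ‖) := by
        rw [key, norm_smul, Real.norm_of_nonneg (by norm_num)]
        gcongr
        exact Matrix.frobenius_norm_mul _ _
    _ = ‖1 - R‖ ^ 2 / 2 := by rw [Matrix.frobenius_norm_transpose]; ring

theorem one_mem_SOset : (1 : Matrix (Fin d) (Fin d) ℝ) ∈ SOset d := by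
  simp [SOset]

theorem distSO_le_of_mem (F : Matrix (Fin d) (Fin d) ℝ) {R : Matrix (Fin d) (Fin d) ℝ}
    (hR : R ∈ SOset d) : distSO F ≤ ‖F - R‖ := by
  rw [← frobNorm_eq_norm]
  refine csInf_le ⟨0, ?_⟩ ⟨R, hR, rfl⟩
  rintro _ ⟨R', -, rfl⟩
  exact Real.sqrt_nonneg _

theorem le_distSO {F : Matrix (Fin d) (Fin d) ℝ} {c : ℝ} (h : ∀ R ∈ SOset d, c ≤ ‖F - R‖) :
    c ≤ distSO F := by
  refine le_csInf ⟨_, 1, one_mem_SOset, rfl⟩ ?_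
  rintro _ ⟨R, hR, rfl⟩
  simpa only [frobNorm_eq_norm] using h R hR

theorem distSO_nonneg (F : Matrix (Fin d) (Fin d) ℝ) : 0 ≤ distSO F :=
  le_distSO fun _ _ => norm_nonneg _

theorem exp_mem_SOset {S : Matrix (Fin d) (Fin d) ℝ} (hS : Sᵀ = -S) : exp S ∈ SOset d := by
  have horth : (exp S)ᵀ * exp S = 1 := by
    rw [← Matrix.exp_transpose, hS, ← Matrix.exp_add_of_commute _ _ (Commute.refl S).neg_left,
      neg_add_cancel, exp_zero]
  refine ⟨horth, ?_⟩
  have hsq : (exp S).det ^ 2 = 1 := by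
    simpa [Matrix.det_mul, Matrix.det_transpose, sq] using congrArg Matrix.det horth
  have hnonneg : 0 ≤ (exp S).det := by
    have hhalf : exp S = exp ((2⁻¹ : ℝ) • S) * exp ((2⁻¹ : ℝ) • S) := by
      rw [← Matrix.exp_add_of_commute _ _ (Commute.refl _), ← add_smul]
      norm_num
    rw [hhalf, Matrix.det_mul]
    exact mul_self_nonneg _
  nlinarith

theorem norm_symMat_sub_le_distSO_one_add (X : Matrix (Fin d) (Fin d) ℝ) :
    ‖symMat X‖ - 2 * ‖X‖ ^ 2 ≤ distSO (1 + X) := by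
  refine le_distSO fun R ⟨hR, _⟩ => ?_
  set t := ‖1 + X - R‖
  have hsym : symMat X = symMat (1 + X - R) + (symMat R - 1) := by
    simp only [symMat, Matrix.transpose_add, Matrix.transpose_sub, Matrix.transpose_one]
    module
  have hX : ‖symMat X‖ ≤ t + ‖1 - R‖ ^ 2 / 2 :=
    calc ‖symMat X‖ ≤ ‖symMat (1 + X - R)‖ + ‖symMat R - 1‖ := hsym ▸ norm_add_le _ _
      _ ≤ t + ‖1 - R‖ ^ 2 / 2 := by
        rw [norm_sub_rev]
        exact add_le_add (norm_symMat_le _) (norm_one_sub_symMat_le hR)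
  have hR1 : ‖1 - R‖ ≤ t + ‖X‖ :=
    calc ‖1 - R‖ = ‖(1 + X - R) - X‖ := by congr 1; abel
      _ ≤ t + ‖X‖ := norm_sub_le _ _
  have hsX : ‖symMat X‖ ≤ ‖X‖ := norm_symMat_le X
  have ht : 0 ≤ t := norm_nonneg _
  rcases le_total ‖X‖ t with hXt | htX
  · nlinarith [sq_nonneg ‖X‖]
  · nlinarith [norm_nonneg (1 - R), norm_nonneg X]

theorem tendsto_distSO_one_add_smul (G : Matrix (Fin d) (Fin d) ℝ) :
    Tendsto (fun h : ℝ => distSO (1 + h • G)) (𝓝[>] 0) (𝓝 0) := by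
  have hlim : Tendsto (fun h : ℝ => ‖h • G‖) (𝓝[>] 0) (𝓝 0) := by
    refine tendsto_nhdsWithin_of_tendsto_nhds (Continuous.tendsto' ?_ 0 _ (by simp))
    fun_prop
  refine squeeze_zero (fun _ => distSO_nonneg _) (fun h => ?_) hlim
  exact (distSO_le_of_mem _ one_mem_SOset).trans_eq (by rw [add_sub_cancel_left])

theorem tendsto_distSO_one_add_smul_div (G : Matrix (Fin d) (Fin d) ℝ) :
    Tendsto (fun h : ℝ => distSO (1 + h • G) / h) (𝓝[>] 0) (𝓝 ‖symMat G‖) := by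
  set A := G - symMat G
  have hA : Aᵀ = -A := by
    simp only [A, symMat, Matrix.transpose_sub, Matrix.transpose_smul, Matrix.transpose_add,
      Matrix.transpose_transpose]
    module
  have hslope := (hasDerivAt_exp_smul_const (𝕂 := ℝ) A 0).tendsto_slope_zero_right
  simp only [zero_add, zero_smul, exp_zero, one_mul] at hslope
  have hupper : Tendsto (fun h : ℝ => ‖G - h⁻¹ • (exp (h • A) - 1)‖) (𝓝[>] 0)
      (𝓝 ‖symMat G‖) := by
    rw [← sub_sub_cancel G (symMat G)]
    exact (hslope.const_sub G).norm
  have hlower : Tendsto (fun h : ℝ => ‖symMat G‖ - 2 * h * ‖G‖ ^ 2) (𝓝[>] 0)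
      (𝓝 ‖symMat G‖) := by
    refine tendsto_nhdsWithin_of_tendsto_nhds (Continuous.tendsto' ?_ 0 _ (by simp))
    fun_prop
  refine tendsto_of_tendsto_of_tendsto_of_le_of_le' hlower hupper ?_ ?_ <;>
    filter_upwards [self_mem_nhdsWithin] with h (hh : 0 < h)
  · rw [le_div_iff₀ hh]
    have := norm_symMat_sub_le_distSO_one_add (h • G)
    rw [symMat_smul, norm_smul, norm_smul, Real.norm_of_nonneg hh.le] at this
    linarith
  · rw [div_le_iff₀ hh]
    have hrot : 1 + h • G - exp (h • A) = h • (G - h⁻¹ • (exp (h • A) - 1)) := by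
      rw [smul_sub h G (h⁻¹ • _), smul_inv_smul₀ hh.ne']
      abel
    calc distSO (1 + h • G) ≤ ‖1 + h • G - exp (h • A)‖ :=
          distSO_le_of_mem _ (exp_mem_SOset (by rw [Matrix.transpose_smul, hA, smul_neg]))
      _ = ‖G - h⁻¹ • (exp (h • A) - 1)‖ * h := by
          rw [hrot, norm_smul, Real.norm_of_nonneg hh.le, mul_comm]

theorem stmt5_general {d : ℕ} (α β ρ : ℝ) (hρ : 0 < ρ)
    (W : Matrix (Fin d) (Fin d) ℝ → ℝ)
    (hlow : ∀ F, α * distSO F ^ 2 ≤ W F)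
    (hup : ∀ F, distSO F ^ 2 ≤ ρ → W F ≤ β * distSO F ^ 2)
    (Q : QuadraticForm ℝ (Matrix (Fin d) (Fin d) ℝ))
    (r : ℝ → ℝ)
    (hrlim : Filter.Tendsto r (nhdsWithin 0 (Set.Ici 0)) (nhds 0))
    (hexp : ∀ G, |W (1 + G) - Q G| ≤ frobNorm G ^ 2 * r (frobNorm G)) :
    ∀ G, α * frobNorm (symMat G) ^ 2 ≤ Q G ∧ Q G ≤ β * frobNorm (symMat G) ^ 2 := by
  intro G
  simp only [frobNorm_eq_norm] at hexp ⊢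
  have hW : Tendsto (fun h : ℝ => W (1 + h • G) / h ^ 2) (𝓝[>] 0) (𝓝 (Q G)) :=
    tendsto_div_sq_of_quadratic_expansion (f := fun X => W (1 + X)) hrlim hexp G
  have hD := (tendsto_distSO_one_add_smul_div G).pow 2
  have hsmall : ∀ᶠ h : ℝ in 𝓝[>] 0, distSO (1 + h • G) ^ 2 ≤ ρ :=
    ((tendsto_distSO_one_add_smul G).pow 2).eventually_le_const (by simpa using hρ)
  constructor
  · refine le_of_tendsto_of_tendsto (hD.const_mul α) hW (Eventually.of_forall fun h => ?_)
    simp only [div_pow, ← mul_div_assoc]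
    exact div_le_div_of_nonneg_right (hlow _) (sq_nonneg h)
  · refine le_of_tendsto_of_tendsto hW (hD.const_mul β) (hsmall.mono fun h hh => ?_)
    simp only [div_pow, ← mul_div_assoc]
    exact div_le_div_of_nonneg_right (hup _ hh) (sq_nonneg h)

/-- If `W` is frame indifferent, non-degenerate (two-sided bound by `dist²(·, SO(d))` near
`SO(d)`) and admits the quadratic expansion `|W(I+G) − Q(G)| ≤ |G|² r(|G|)` with `r`
increasing and `r(δ) → 0` as `δ → 0`, then the quadratic form `Q` satisfies
`α |sym G|² ≤ Q(G) ≤ β |sym G|²`. -/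
theorem stmt5 {d : ℕ} (α β ρ : ℝ) (hα : 0 < α) (hαβ : α ≤ β) (hρ : 0 < ρ)
    (W : Matrix (Fin d) (Fin d) ℝ → ℝ) (hW0 : ∀ F, 0 ≤ W F)
    (hframe : ∀ R ∈ SOset d, ∀ F, W (R * F) = W F)
    (hlow : ∀ F, α * distSO F ^ 2 ≤ W F)
    (hup : ∀ F, distSO F ^ 2 ≤ ρ → W F ≤ β * distSO F ^ 2)
    (Q : QuadraticForm ℝ (Matrix (Fin d) (Fin d) ℝ))
    (r : ℝ → ℝ) (hr0 : ∀ t, 0 ≤ r t) (hrmono : Monotone r)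
    (hrlim : Filter.Tendsto r (nhdsWithin 0 (Set.Ici 0)) (nhds 0))
    (hexp : ∀ G, |W (1 + G) - Q G| ≤ frobNorm G ^ 2 * r (frobNorm G)) :
    ∀ G, α * frobNorm (symMat G) ^ 2 ≤ Q G ∧ Q G ≤ β * frobNorm (symMat G) ^ 2 :=
  stmt5_general α β ρ hρ W hlow hup Q r hrlim hexp

end Frobenius
end

section
/- Let m, d ∈ ℕ, γ > 0, Q ⊂ ℝ^d a cube, and E, F ⊂ Q measurable with |E|, |F| ≥ γ|Q|. There exists c = c(γ, m, d) such that for every polynomial P : ℝ^d → ℝ of degree at most m and every 1 ≤ p ≤ ∞: ‖P‖_{L^p(F)} ≤ c ‖P‖_{L^p(E)}. -/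
/-!
Rescaling the cube to `[0,1]^d` preserves polynomials of degree at most `m` and multiplies both
norms by the same factor, so it suffices to treat the unit cube. There these polynomials form a
finite-dimensional space `V`, and a nonzero one vanishes only on a null set. Hence
`Θ(P) = inf {‖P‖_{L¹(E)} : |E| ≥ γ}` is positive on `V \ {0}`; it is also Lipschitz, so by
compactness of the unit sphere `Θ(P) ≥ ε‖P‖`. For `|E|, |F| ≤ 1` this gives
`‖P‖_{L^p(F)} ≤ ‖P‖_∞ ≤ K‖P‖ ≤ (K/ε)‖P‖_{L¹(E)} ≤ (K/ε)‖P‖_{L^p(E)}`.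
-/

open MeasureTheory Filter Topology Set MvPolynomial
open scoped ENNReal NNReal

section SmallMass

variable {X : Type*} [MeasurableSpace X] {μ : Measure X}

theorem eLpNorm_le_of_ae_enorm_bound_of_measure_univ_le_one (hμ : μ univ ≤ 1) {f : X → ℝ}
    {C : ℝ≥0∞} (hfC : ∀ᵐ x ∂μ, ‖f x‖ₑ ≤ C) (p : ℝ≥0∞) : eLpNorm f p μ ≤ C :=
  (eLpNorm_le_of_ae_enorm_bound hfC).trans
    (mul_le_of_le_one_right' (ENNReal.rpow_le_one hμ (by positivity)))

theorem eLpNorm_one_le_eLpNorm_of_measure_univ_le_one (hμ : μ univ ≤ 1) {f : X → ℝ}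
    (hf : AEStronglyMeasurable f μ) {p : ℝ≥0∞} (hp : 1 ≤ p) :
    eLpNorm f 1 μ ≤ eLpNorm f p μ := by
  have hexp : 0 ≤ 1 / (1 : ℝ≥0∞).toReal - 1 / p.toReal := by
    rw [ENNReal.toReal_one, div_one, sub_nonneg, one_div, ← ENNReal.toReal_inv]
    exact ENNReal.toReal_le_of_le_ofReal zero_le_one (by simpa using ENNReal.inv_le_one.2 hp)
  exact (eLpNorm_le_eLpNorm_mul_rpow_measure_univ hp hf).trans
    (mul_le_of_le_one_right' (ENNReal.rpow_le_one hμ hexp))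

end SmallMass

section LargeSets

variable {X : Type*} [MeasurableSpace X] (μ : Measure X) (γ : ℝ≥0∞)

noncomputable def infL1NormLargeSets (f : X → ℝ) : ℝ≥0∞ :=
  ⨅ E : {E : Set X // MeasurableSet E ∧ γ ≤ μ E}, eLpNorm f 1 (μ.restrict E)

variable {μ γ}

theorem infL1NormLargeSets_le {f : X → ℝ} {E : Set X} (hE : MeasurableSet E) (hγE : γ ≤ μ E) :
    infL1NormLargeSets μ γ f ≤ eLpNorm f 1 (μ.restrict E) :=
  iInf_le (fun E : {E : Set X // MeasurableSet E ∧ γ ≤ μ E} => eLpNorm f 1 (μ.restrict E))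
    ⟨E, hE, hγE⟩

theorem infL1NormLargeSets_add_le {f g : X → ℝ} (hf : AEStronglyMeasurable f μ)
    (hg : AEStronglyMeasurable g μ) :
    infL1NormLargeSets μ γ (f + g) ≤ infL1NormLargeSets μ γ f + eLpNorm g 1 μ := by
  rw [infL1NormLargeSets, infL1NormLargeSets, ENNReal.iInf_add]
  gcongr with E
  calc eLpNorm (f + g) 1 (μ.restrict E)
      ≤ eLpNorm f 1 (μ.restrict E) + eLpNorm g 1 (μ.restrict E) :=
        eLpNorm_add_le hf.restrict hg.restrict le_rfl
    _ ≤ eLpNorm f 1 (μ.restrict E) + eLpNorm g 1 μ :=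
        add_le_add_right (eLpNorm_mono_measure g Measure.restrict_le_self) _

theorem ofReal_mul_sub_le_eLpNorm_restrict {f : X → ℝ} (hf : Measurable f) {E : Set X}
    (hE : MeasurableSet E) (r : ℝ) :
    ENNReal.ofReal r * (μ E - μ {x | |f x| < r}) ≤ eLpNorm f 1 (μ.restrict E) := by
  have hlarge : μ E - μ {x | |f x| < r} ≤ μ.restrict E {x | ENNReal.ofReal r ≤ ‖f x‖ₑ} := by
    rw [tsub_le_iff_right, Measure.restrict_apply' hE]
    refine (measure_le_inter_add_sdiff μ E {x | ENNReal.ofReal r ≤ ‖f x‖ₑ}).trans ?_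
    rw [inter_comm]
    refine add_le_add_right (measure_mono fun x hx => ?_) _
    by_contra hlt
    exact hx.2 (ENNReal.ofReal_le_of_le_toReal (by simpa using hlt))
  calc ENNReal.ofReal r * (μ E - μ {x | |f x| < r})
      ≤ ENNReal.ofReal r * μ.restrict E {x | ENNReal.ofReal r ≤ ‖f x‖ₑ} := by gcongr
    _ ≤ ∫⁻ x, ‖f x‖ₑ ∂μ.restrict E := mul_meas_ge_le_lintegral₀ hf.enorm.aemeasurable _
    _ = eLpNorm f 1 (μ.restrict E) := eLpNorm_one_eq_lintegral_enorm.symm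

theorem exists_pos_measure_abs_lt_lt [IsFiniteMeasure μ] {f : X → ℝ} (hf : Measurable f)
    (hf0 : μ {x | f x = 0} = 0) (hγ : 0 < γ) : ∃ r > 0, μ {x | |f x| < r} < γ := by
  have hlim : Tendsto (fun r => μ {x | |f x| < r}) (𝓝[>] 0)
      (𝓝 (μ (⋂ r > (0 : ℝ), {x | |f x| < r}))) :=
    tendsto_measure_biInter_gt
      (fun r _ => (measurableSet_lt hf.abs measurable_const).nullMeasurableSet)
      (fun r s _ hrs x hx => lt_of_lt_of_le hx hrs) ⟨1, one_pos, measure_ne_top μ _⟩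
  have hzero : ⋂ r > (0 : ℝ), {x | |f x| < r} = {x | f x = 0} := by
    ext x
    simp only [mem_iInter, mem_ofPred]
    refine ⟨fun h => abs_nonpos_iff.1 (le_of_forall_pos_lt_add fun r hr => by simpa using h r hr),
      fun h r hr => by simpa [h] using hr⟩
  rw [hzero, hf0] at hlim
  obtain ⟨r, hr, hrpos⟩ := ((hlim.eventually (gt_mem_nhds hγ)).and self_mem_nhdsWithin).exists
  exact ⟨r, hrpos, hr⟩

theorem infL1NormLargeSets_pos [IsFiniteMeasure μ] {f : X → ℝ} (hf : Measurable f)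
    (hf0 : μ {x | f x = 0} = 0) (hγ : 0 < γ) : 0 < infL1NormLargeSets μ γ f := by
  obtain ⟨r, hr, hμr⟩ := exists_pos_measure_abs_lt_lt hf hf0 hγ
  calc (0 : ℝ≥0∞) < ENNReal.ofReal r * (γ - μ {x | |f x| < r}) :=
        ENNReal.mul_pos (ENNReal.ofReal_pos.2 hr).ne' (tsub_pos_of_lt hμr).ne'
    _ ≤ infL1NormLargeSets μ γ f := le_iInf fun E =>
        (mul_le_mul_right (tsub_le_tsub_right E.2.2 _) _).trans
          (ofReal_mul_sub_le_eLpNorm_restrict hf E.2.1 r)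

section FiniteDimensionalFamily

variable {V : Type*} [NormedAddCommGroup V] [NormedSpace ℝ V]
  (Φ : V →ₗ[ℝ] X → ℝ) (hmeas : ∀ v, Measurable (Φ v)) {K : ℝ≥0}
  (hK : ∀ v, ∀ᵐ x ∂μ, ‖Φ v x‖ₑ ≤ K * ‖v‖ₑ)
include hmeas hK

theorem continuous_infL1NormLargeSets_comp [IsFiniteMeasure μ] :
    Continuous fun v => infL1NormLargeSets μ γ (Φ v) := by
  refine continuous_of_le_add_edist (K * μ univ) (by finiteness) fun v w => ?_
  calc infL1NormLargeSets μ γ (Φ v) = infL1NormLargeSets μ γ (Φ w + Φ (v - w)) := by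
        rw [← map_add, add_sub_cancel]
    _ ≤ infL1NormLargeSets μ γ (Φ w) + eLpNorm (Φ (v - w)) 1 μ :=
        infL1NormLargeSets_add_le (hmeas w).aestronglyMeasurable (hmeas _).aestronglyMeasurable
    _ ≤ infL1NormLargeSets μ γ (Φ w) + K * μ univ * edist v w := by
        gcongr
        refine (eLpNorm_le_of_ae_enorm_bound (hK (v - w))).trans_eq ?_
        simp [edist_eq_enorm_sub, mul_right_comm]

theorem exists_pos_mul_enorm_le_eLpNorm_restrict [FiniteDimensional ℝ V] [IsFiniteMeasure μ]
    (hnull : ∀ v ≠ 0, μ {x | Φ v x = 0} = 0) (hγ : 0 < γ) :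
    ∃ ε : ℝ≥0, 0 < ε ∧ ∀ E, MeasurableSet E → γ ≤ μ E →
      ∀ v, ε * ‖v‖ₑ ≤ eLpNorm (Φ v) 1 (μ.restrict E) := by
  rcases subsingleton_or_nontrivial V with hV | hV
  · exact ⟨1, one_pos, fun E _ _ v => by simp [Subsingleton.elim v 0]⟩
  obtain ⟨u₀, hu₀, hmin⟩ := (isCompact_sphere (0 : V) 1).exists_isMinOn
    (NormedSpace.sphere_nonempty.2 zero_le_one)
    (continuous_infL1NormLargeSets_comp (γ := γ) Φ hmeas hK).continuousOn
  obtain ⟨ε, hε, hεu₀⟩ := ENNReal.lt_iff_exists_nnreal_btwn.1 <|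
    infL1NormLargeSets_pos (hmeas u₀) (hnull u₀ (ne_zero_of_mem_unit_sphere ⟨u₀, hu₀⟩)) hγ
  refine ⟨ε, ENNReal.coe_pos.1 hε, fun E hE hγE v => ?_⟩
  rcases eq_or_ne v 0 with rfl | hv
  · simp
  have hu : ‖v‖⁻¹ • v ∈ Metric.sphere (0 : V) 1 := by simp [norm_smul, hv]
  calc ε * ‖v‖ₑ ≤ ‖v‖ₑ * infL1NormLargeSets μ γ (Φ (‖v‖⁻¹ • v)) := by
        rw [mul_comm]
        gcongr
        exact hεu₀.le.trans (hmin hu)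
    _ ≤ ‖v‖ₑ * eLpNorm (Φ (‖v‖⁻¹ • v)) 1 (μ.restrict E) := by
        gcongr; exact infL1NormLargeSets_le hE hγE
    _ = eLpNorm (Φ v) 1 (μ.restrict E) := by
        rw [map_smul, eLpNorm_const_smul, ← mul_assoc]
        simp [hv, ENNReal.mul_inv_cancel]

theorem exists_eLpNorm_restrict_le_mul_eLpNorm_restrict [FiniteDimensional ℝ V]
    [IsProbabilityMeasure μ] (hnull : ∀ v ≠ 0, μ {x | Φ v x = 0} = 0) (hγ : 0 < γ) :
    ∃ C : ℝ≥0, 0 < C ∧ ∀ E F, MeasurableSet E → MeasurableSet F → γ ≤ μ E → γ ≤ μ F →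
      ∀ v p, 1 ≤ p →
        eLpNorm (Φ v) p (μ.restrict F) ≤ C * eLpNorm (Φ v) p (μ.restrict E) := by
  obtain ⟨ε, hε, hlower⟩ := exists_pos_mul_enorm_le_eLpNorm_restrict Φ hmeas hK hnull hγ
  refine ⟨(K + 1) / ε, div_pos (add_pos_of_nonneg_of_pos K.2 one_pos) hε,
    fun E F hE hF hγE hγF v p hp => ?_⟩
  have hmass : ∀ S, μ.restrict S univ ≤ 1 := fun S => by simpa using prob_le_one
  calc eLpNorm (Φ v) p (μ.restrict F) ≤ K * ‖v‖ₑ :=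
        eLpNorm_le_of_ae_enorm_bound_of_measure_univ_le_one (hmass F) (ae_restrict_of_ae (hK v)) p
    _ ≤ ((K + 1) / ε : ℝ≥0) * (ε * ‖v‖ₑ) := by
        rw [← mul_assoc, ENNReal.coe_div hε.ne',
          ENNReal.div_mul_cancel (by exact_mod_cast hε.ne') ENNReal.coe_ne_top]
        gcongr
        exact_mod_cast le_self_add
    _ ≤ _ := by
        gcongr
        exact (hlower E hE hγE v).trans (eLpNorm_one_le_eLpNorm_of_measure_univ_le_one (hmass E)
          (hmeas v).aestronglyMeasurable hp)

end FiniteDimensionalFamily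

end LargeSets

theorem MvPolynomial.volume_zeroSet_eq_zero :
    ∀ {n : ℕ} {P : MvPolynomial (Fin n) ℝ}, P ≠ 0 → volume {x | eval x P = 0} = 0
  | 0, P, hP => by
    obtain ⟨a, rfl⟩ := C_surjective (Fin 0) P
    simp_all
  | n + 1, P, hP => by
    set Q := finSuccEquiv ℝ n P
    obtain ⟨k, hk⟩ : ∃ k, Q.coeff k ≠ 0 :=
      ⟨Q.natDegree, by simpa [Q] using hP⟩
    -- Fubini in the first coordinate: for a.e. `y` the coefficient `Q.coeff k` does not vanish
    -- at `y`, so the slice `t ↦ P (t, y)` is a nonzero polynomial with finitely many roots.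
    have hroots : ∀ᵐ y : Fin n → ℝ, volume {t : ℝ | eval (Fin.cons t y) P = 0} = 0 := by
      refine (measure_eq_zero_iff_ae_notMem.1 (volume_zeroSet_eq_zero hk)).mono fun y hy => ?_
      have hQy : Polynomial.map (eval y) Q ≠ 0 := fun h =>
        hy (by simpa using congrArg (·.coeff k) h)
      simp_rw [eval_eq_eval_mv_eval']
      exact (Polynomial.finite_setOfPred_isRoot hQy).measure_zero volume
    let e := MeasurableEquiv.piFinSuccAbove (fun _ : Fin (n + 1) => ℝ) 0
    set S := {p : ℝ × (Fin n → ℝ) | eval (Fin.cons p.1 p.2) P = 0}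
    have hS : {x | eval x P = 0} = e ⁻¹' S := by
      ext x
      simp [S, e]
    have hmeas : MeasurableSet S :=
      measurableSet_eq_fun ((continuous_eval P).comp
        (continuous_fst.finCons continuous_snd)).measurable measurable_const
    rw [hS, (volume_preserving_piFinSuccAbove (fun _ : Fin (n + 1) => ℝ) 0).measure_preimage
      hmeas.nullMeasurableSet, Measure.volume_eq_prod, Measure.prod_apply_symm hmeas]
    exact (lintegral_congr_ae hroots).trans lintegral_zero

section PolynomialFunctions

variable {d : ℕ} (T : Finset (Fin d →₀ ℕ))

-- Polynomials with exponents in `T` are parametrized by their coefficient vectors; the sup norm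
-- on `T → ℝ` is the norm used for the compactness argument.
noncomputable def monomialCombination : (T → ℝ) →ₗ[ℝ] MvPolynomial (Fin d) ℝ :=
  Fintype.linearCombination ℝ fun s : T => monomial (s : Fin d →₀ ℕ) 1

noncomputable def evalCoeffs : (T → ℝ) →ₗ[ℝ] (Fin d → ℝ) → ℝ :=
  LinearMap.pi (fun x => (aeval x).toLinearMap) ∘ₗ monomialCombination T

variable {T}

theorem evalCoeffs_apply (c : T → ℝ) (x : Fin d → ℝ) :
    evalCoeffs T c x = eval x (monomialCombination T c) := by
  simp [evalCoeffs]

theorem monomialCombination_injective : Function.Injective (monomialCombination T) :=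
  ((basisMonomials (Fin d) ℝ).linearIndependent.comp _ Subtype.val_injective)
    |>.fintypeLinearCombination_injective

theorem exists_evalCoeffs_eq {P : MvPolynomial (Fin d) ℝ}
    (hP : P ∈ restrictSupport ℝ (T : Set (Fin d →₀ ℕ))) :
    ∃ c, evalCoeffs T c = fun x => eval x P := by
  rw [restrictSupport_eq_span, image_eq_range, ← Fintype.range_linearCombination] at hP
  obtain ⟨c, hc⟩ := hP
  exact ⟨c, funext fun x => by rw [evalCoeffs_apply]; exact congrArg (eval x) hc⟩

theorem continuous_evalCoeffs (c : T → ℝ) : Continuous (evalCoeffs T c) :=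
  (continuous_eval (monomialCombination T c)).congr fun x => (evalCoeffs_apply c x).symm

theorem volume_evalCoeffs_zeroSet {c : T → ℝ} (hc : c ≠ 0) :
    volume {x | evalCoeffs T c x = 0} = 0 := by
  simpa only [evalCoeffs_apply] using
    volume_zeroSet_eq_zero ((map_ne_zero_iff _ monomialCombination_injective).2 hc)

theorem nnnorm_eval_monomial_one_le {x : Fin d → ℝ} (hx : x ∈ Icc 0 1) (s : Fin d →₀ ℕ) :
    ‖eval x (monomial s (1 : ℝ))‖₊ ≤ 1 := by
  have h0 : ∀ i, 0 ≤ x i := fun i => hx.1 i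
  rw [eval_monomial, one_mul, Finsupp.prod, ← NNReal.coe_le_one, coe_nnnorm, Real.norm_eq_abs,
    abs_of_nonneg (Finset.prod_nonneg fun i _ => pow_nonneg (h0 i) _)]
  exact Finset.prod_le_one (fun i _ => pow_nonneg (h0 i) _) fun i _ => pow_le_one₀ (h0 i) (hx.2 i)

theorem enorm_evalCoeffs_le (c : T → ℝ) {x : Fin d → ℝ} (hx : x ∈ Icc 0 1) :
    ‖evalCoeffs T c x‖ₑ ≤ T.card * ‖c‖ₑ := by
  rw [enorm_eq_nnnorm, enorm_eq_nnnorm]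
  norm_cast
  rw [evalCoeffs_apply, monomialCombination, Fintype.linearCombination_apply, map_sum]
  calc ‖∑ s : T, eval x (c s • monomial (s : Fin d →₀ ℕ) 1)‖₊
      ≤ ∑ s : T, ‖c‖₊ := (nnnorm_sum_le _ _).trans (Finset.sum_le_sum fun s _ => ?_)
    _ = T.card * ‖c‖₊ := by simp
  rw [smul_eval, nnnorm_mul, mul_comm]
  exact mul_le_of_le_one_of_le (nnnorm_eval_monomial_one_le hx s) (nnnorm_le_pi_nnnorm c s)

end PolynomialFunctions

theorem MvPolynomial.totalDegree_aeval_le {σ τ R : Type*} [CommSemiring R]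
    {g : σ → MvPolynomial τ R} (hg : ∀ i, (g i).totalDegree ≤ 1) (P : MvPolynomial σ R) :
    (aeval g P).totalDegree ≤ P.totalDegree := by
  rw [aeval_def, eval₂_eq]
  refine (totalDegree_finsetSum _ _).trans (Finset.sup_le fun s hs => ?_)
  refine (totalDegree_mul _ _).trans ?_
  rw [algebraMap_eq, totalDegree_C, zero_add]
  calc (∏ i ∈ s.support, g i ^ s i).totalDegree ≤ ∑ i ∈ s.support, (g i ^ s i).totalDegree :=
        totalDegree_finsetProd _ _
    _ ≤ ∑ i ∈ s.support, s i :=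
        Finset.sum_le_sum fun i _ =>
          (totalDegree_pow _ _).trans (mul_le_of_le_one_right (Nat.zero_le _) (hg i))
    _ ≤ P.totalDegree := le_totalDegree hs

theorem MvPolynomial.totalDegree_C_add_C_mul_X_le {σ R : Type*} [CommSemiring R] (a b : R) (i : σ) :
    (C a + C b * X i).totalDegree ≤ 1 :=
  (totalDegree_add _ _).trans (max_le (by simp) ((totalDegree_mul _ _).trans (by
    rw [totalDegree_C, zero_add]
    exact (totalDegree_monomial_le (Finsupp.single i 1) (1 : R)).trans (by simp))))

theorem MvPolynomial.eval_aeval_C_add_C_mul_X {d : ℕ} (x0 : Fin d → ℝ) (l : ℝ)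
    (P : MvPolynomial (Fin d) ℝ) (y : Fin d → ℝ) :
    eval y (aeval (fun i => C (x0 i) + C l * X i) P) = eval (x0 + l • y) P := by
  change aeval y (aeval _ P) = aeval (x0 + l • y) P
  rw [comp_aeval_apply]
  congr 1
  ext i
  simp

section AffineRescaling

theorem measurePreserving_add_smul {E : Type*} [NormedAddCommGroup E] [NormedSpace ℝ E]
    [MeasurableSpace E] [BorelSpace E] [FiniteDimensional ℝ E] (μ : Measure E)
    [μ.IsAddHaarMeasure] (x : E) {r : ℝ} (hr : r ≠ 0) :
    MeasurePreserving (fun y => x + r • y) (ENNReal.ofReal |r ^ Module.finrank ℝ E| • μ) μ := by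
  refine ⟨by fun_prop, ?_⟩
  have hcomp : (fun y => x + r • y) = (x + ·) ∘ (r • ·) := rfl
  rw [hcomp, Measure.map_smul, ← Measure.map_map (by fun_prop) (by fun_prop),
    Measure.map_addHaar_smul μ hr, Measure.map_smul, map_add_left_eq_self, smul_smul,
    ← ENNReal.ofReal_mul (abs_nonneg _), abs_inv, mul_inv_cancel₀ (by simp [hr]),
    ENNReal.ofReal_one, one_smul]

variable {α β : Type*} [MeasurableSpace α] [MeasurableSpace β] {ν : Measure α} {μ : Measure β}
  {A : α → β} {κ : ℝ≥0∞}

theorem eLpNorm_restrict_eq_of_measurePreserving_smul (hA : MeasurePreserving A (κ • ν) μ)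
    (hκ : κ ≠ 0) {f : β → ℝ} (hf : AEStronglyMeasurable f μ) {S : Set β} (hS : MeasurableSet S)
    (p : ℝ≥0∞) :
    eLpNorm f p (μ.restrict S) =
      κ ^ (1 / p).toReal * eLpNorm (f ∘ A) p (ν.restrict (A ⁻¹' S)) := by
  rw [← eLpNorm_comp_measurePreserving hf.restrict (hA.restrict_preimage hS),
    Measure.restrict_smul, eLpNorm_smul_measure_of_ne_zero hκ, smul_eq_mul]

theorem mul_measure_preimage_le_of_measurePreserving_smul (hA : MeasurePreserving A (κ • ν) μ)
    (hκ : κ ≠ 0) (hκ' : κ ≠ ∞) {a : ℝ≥0∞} {S S' : Set β} (hS : MeasurableSet S)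
    (hS' : MeasurableSet S') (h : a * μ S ≤ μ S') : a * ν (A ⁻¹' S) ≤ ν (A ⁻¹' S') := by
  rw [← hA.measure_preimage hS.nullMeasurableSet, ← hA.measure_preimage hS'.nullMeasurableSet,
    Measure.smul_apply, Measure.smul_apply, smul_eq_mul, smul_eq_mul, mul_left_comm] at h
  exact (ENNReal.mul_le_mul_iff_right hκ hκ').1 h

theorem preimage_add_smul_pi_Icc {d : ℕ} (x0 : Fin d → ℝ) {l : ℝ} (hl : 0 < l) :
    (fun y => x0 + l • y) ⁻¹' univ.pi (fun i => Icc (x0 i) (x0 i + l)) = Icc 0 1 := by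
  ext y
  simp [Pi.le_def, hl]

theorem le_volume_preimage_add_smul {d : ℕ} (x0 : Fin d → ℝ) {l : ℝ} (hl : 0 < l) {a : ℝ≥0∞}
    {S : Set (Fin d → ℝ)} (hS : MeasurableSet S)
    (h : a * volume (univ.pi fun i => Icc (x0 i) (x0 i + l)) ≤ volume S) :
    a ≤ volume ((fun y => x0 + l • y) ⁻¹' S) := by
  have := mul_measure_preimage_le_of_measurePreserving_smul
    (measurePreserving_add_smul volume x0 hl.ne') (by simp [hl.ne']) ENNReal.ofReal_ne_top
    (MeasurableSet.univ_pi fun _ => measurableSet_Icc) hS h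
  rw [preimage_add_smul_pi_Icc x0 hl, Real.volume_Icc_pi] at this
  simpa using this

end AffineRescaling

theorem exists_eLpNorm_restrict_le_mul_of_subset_Icc (d m : ℕ) {γ : ℝ≥0∞} (hγ : 0 < γ) :
    ∃ C : ℝ≥0, 0 < C ∧ ∀ E F : Set (Fin d → ℝ), MeasurableSet E → MeasurableSet F →
      E ⊆ Icc 0 1 → F ⊆ Icc 0 1 → γ ≤ volume E → γ ≤ volume F →
      ∀ P : MvPolynomial (Fin d) ℝ, P.totalDegree ≤ m → ∀ p, 1 ≤ p →
        eLpNorm (fun x => eval x P) p (volume.restrict F) ≤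
          C * eLpNorm (fun x => eval x P) p (volume.restrict E) := by
  let T := (Finsupp.finite_of_degree_le (σ := Fin d) m).toFinset
  have : IsProbabilityMeasure (volume.restrict (Icc (0 : Fin d → ℝ) 1)) :=
    ⟨by simp [Real.volume_Icc_pi]⟩
  obtain ⟨C, hC, hcomp⟩ := exists_eLpNorm_restrict_le_mul_eLpNorm_restrict (evalCoeffs T)
    (fun c => (continuous_evalCoeffs c).measurable)
    (fun c => ae_restrict_of_forall_mem measurableSet_Icc fun x hx => enorm_evalCoeffs_le c hx)
    (fun c hc => nonpos_iff_eq_zero.1 ((Measure.restrict_apply_le _ _).trans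
      (volume_evalCoeffs_zeroSet hc).le)) hγ
  refine ⟨C, hC, fun E F hE hF hEQ hFQ hγE hγF P hP p hp => ?_⟩
  have hPT : P ∈ restrictSupport ℝ (T : Set (Fin d →₀ ℕ)) := by
    rw [Set.Finite.coe_toFinset]
    exact (mem_restrictTotalDegree _ _ P).2 hP
  obtain ⟨c, hc⟩ := exists_evalCoeffs_eq hPT
  have := hcomp E F hE hF (by rwa [Measure.restrict_eq_self _ hEQ])
    (by rwa [Measure.restrict_eq_self _ hFQ]) c p hp
  rwa [Measure.restrict_restrict_of_subset hEQ, Measure.restrict_restrict_of_subset hFQ, hc] at this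

/-- Polynomial norm comparison on subsets of a cube of definite measure fraction: for
`m, d, γ` there is `c = c(γ, m, d) > 0` such that for every cube `Q ⊂ ℝ^d`, all measurable
`E, F ⊆ Q` with `|E|, |F| ≥ γ|Q|`, every polynomial `P` of degree at most `m` and every
`1 ≤ p ≤ ∞`, one has `‖P‖_{L^p(F)} ≤ c ‖P‖_{L^p(E)}`. -/
theorem stmt13 (d m : ℕ) (γ : ℝ) (hγ : 0 < γ) :
    ∃ c > (0 : ℝ), ∀ (x0 : Fin d → ℝ) (l : ℝ), 0 < l →
      ∀ E F : Set (Fin d → ℝ), MeasurableSet E → MeasurableSet F →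
        E ⊆ Set.univ.pi (fun i => Set.Icc (x0 i) (x0 i + l)) →
        F ⊆ Set.univ.pi (fun i => Set.Icc (x0 i) (x0 i + l)) →
        ENNReal.ofReal γ * volume (Set.univ.pi (fun i => Set.Icc (x0 i) (x0 i + l)))
          ≤ volume E →
        ENNReal.ofReal γ * volume (Set.univ.pi (fun i => Set.Icc (x0 i) (x0 i + l)))
          ≤ volume F →
        ∀ P : MvPolynomial (Fin d) ℝ, P.totalDegree ≤ m →
          ∀ p : ℝ≥0∞, 1 ≤ p →
            eLpNorm (fun x => MvPolynomial.eval x P) p (volume.restrict F)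
              ≤ ENNReal.ofReal c *
                eLpNorm (fun x => MvPolynomial.eval x P) p (volume.restrict E) := by
  obtain ⟨c, hc, hunit⟩ :=
    exists_eLpNorm_restrict_le_mul_of_subset_Icc d m (ENNReal.ofReal_pos.2 hγ)
  refine ⟨c, hc, fun x0 l hl E F hE hF hEQ hFQ hγE hγF P hP p hp => ?_⟩
  have hA := measurePreserving_add_smul (volume : Measure (Fin d → ℝ)) x0 hl.ne'
  have hκ : ENNReal.ofReal |l ^ Module.finrank ℝ (Fin d → ℝ)| ≠ 0 := by simp [hl.ne']
  have hQ := preimage_add_smul_pi_Icc x0 hl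
  have hP' : (fun x => eval x P) ∘ (fun y => x0 + l • y) =
      fun y => eval y (aeval (fun i => C (x0 i) + C l * X i) P) :=
    funext fun y => (eval_aeval_C_add_C_mul_X x0 l P y).symm
  have hPmeas : AEStronglyMeasurable (fun x => eval x P) volume :=
    (continuous_eval P).aestronglyMeasurable
  rw [eLpNorm_restrict_eq_of_measurePreserving_smul hA hκ hPmeas hF,
    eLpNorm_restrict_eq_of_measurePreserving_smul hA hκ hPmeas hE, ENNReal.ofReal_coe_nnreal,
    mul_left_comm, hP']
  gcongr
  exact hunit _ _ (hA.measurable hE) (hA.measurable hF) (hQ ▸ preimage_mono hEQ)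
    (hQ ▸ preimage_mono hFQ) (le_volume_preimage_add_smul x0 hl hE hγE)
    (le_volume_preimage_add_smul x0 hl hF hγF) _
    ((totalDegree_aeval_le (fun i => totalDegree_C_add_C_mul_X_le _ _ i) P).trans hP) p hp
end

section
/- Let Ω ⊂ ℝ^d be a bounded Lipschitz domain, 1 < p < ∞, and A ∈ L^∞(Ω, ℝ^{d×d}) with A = Da for a Bilipschitz map a : Ω → ℝ^d. Suppose for every sequence (φ_k) ⊂ W^{1,p}_per,0(Y,ℝ^d) with ‖φ_k‖_{W^{1,p}} = 1 and ‖sym(Dφ_k A^{-1})‖_{L^p} → 0, weak compactness plus a compactness-type Korn inequality (‖u‖_{W^{1,p}} ≤ C(‖u‖_{L^p} + ‖sym(Du A^{-1})‖_{L^p})) forces a contradiction. Conclude: if φ ∈ W^{1,p}_loc(ℝ^d, ℝ^d) is Y-periodic with mean zero, A ∈ SFJ_per with Bilipschitz potential a, and sym(Dφ · A^{-1}) = 0 a.e., then φ = 0. -/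
/-!
Put `ψ = φ ∘ a⁻¹`. By the chain rule `Dψ = (Dφ · A⁻¹) ∘ a⁻¹` is skew everywhere, so
`t ↦ ψ (x + t • v) ⬝ᵥ v` is constant and the increments `(ψ (x + u) - ψ x) ⬝ᵥ v` are
antisymmetric in `u` and `v`. With `w = ψ (x + v) - ψ x` and `u = t • w` this gives
`t * (w ⬝ᵥ w) = -(ψ (x + t • w) - ψ x) ⬝ᵥ v`, which stays bounded in `t` because `ψ` has the
same range as the continuous periodic map `φ`. Hence `w = 0`, so `φ` is constant and its zero
mean makes it vanish.
-/
open MeasureTheory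

noncomputable def Dmat {d : ℕ} (f : (Fin d → ℝ) → (Fin d → ℝ)) (y : Fin d → ℝ) :
    Matrix (Fin d) (Fin d) ℝ :=
  LinearMap.toMatrix' (fderiv ℝ f y).toLinearMap

def Ycell (d : ℕ) : Set (Fin d → ℝ) := Set.univ.pi fun _ => Set.Ico (0 : ℝ) 1

open Matrix Bornology

lemma dotProduct_mulVec_self_eq_zero_of_symMat_eq_zero {d : ℕ} {M : Matrix (Fin d) (Fin d) ℝ}
    (h : symMat M = 0) (v : Fin d → ℝ) : M *ᵥ v ⬝ᵥ v = 0 := by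
  have hT : Mᵀ = -M := eq_neg_of_add_eq_zero_right <|
    (smul_eq_zero.1 h).resolve_left (by norm_num)
  have : M *ᵥ v ⬝ᵥ v = -(M *ᵥ v ⬝ᵥ v) := by
    calc M *ᵥ v ⬝ᵥ v = Mᵀ *ᵥ v ⬝ᵥ v := by
          rw [mulVec_transpose, dotProduct_comm, dotProduct_mulVec]
      _ = -(M *ᵥ v ⬝ᵥ v) := by rw [hT, neg_mulVec, neg_dotProduct]
  linarith

lemma fderiv_apply_eq_Dmat_mulVec {d : ℕ} (f : (Fin d → ℝ) → (Fin d → ℝ))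
    (y v : Fin d → ℝ) : fderiv ℝ f y v = Dmat f y *ᵥ v := by
  rw [Dmat, ← Matrix.toLin'_apply, Matrix.toLin'_toMatrix']
  rfl

lemma Dmat_comp {d : ℕ} {f g : (Fin d → ℝ) → (Fin d → ℝ)} {x : Fin d → ℝ}
    (hf : DifferentiableAt ℝ f (g x)) (hg : DifferentiableAt ℝ g x) :
    Dmat (f ∘ g) x = Dmat f (g x) * Dmat g x := by
  rw [Dmat, fderiv_comp x hf hg]
  exact LinearMap.toMatrix'_comp _ _

lemma differentiableAt_and_Dmat_of_rightInverse {d : ℕ} {a g : (Fin d → ℝ) → (Fin d → ℝ)}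
    {x : Fin d → ℝ} (hg : ContinuousAt g x) (hag : Function.RightInverse g a)
    (ha : DifferentiableAt ℝ a (g x)) (hdet : IsUnit (Dmat a (g x)).det) :
    DifferentiableAt ℝ g x ∧ Dmat g x = (Dmat a (g x))⁻¹ := by
  let E := ((Dmat a (g x)).toLinearEquiv'
    ((Dmat a (g x)).invertibleOfIsUnitDet hdet)).toContinuousLinearEquiv
  have hE : HasFDerivAt a (E : (Fin d → ℝ) →L[ℝ] (Fin d → ℝ)) (g x) := by
    convert ha.hasFDerivAt using 1
    ext1 v
    exact (fderiv_apply_eq_Dmat_mulVec a (g x) v).symm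
  have hgx : DifferentiableAt ℝ g x :=
    (hE.of_local_left_inverse hg (Filter.Eventually.of_forall hag)).differentiableAt
  refine ⟨hgx, (Matrix.inv_eq_right_inv ?_).symm⟩
  have hid : a ∘ g = id := funext hag
  rw [← Dmat_comp ha hgx, hid, Dmat, fderiv_id]
  exact LinearMap.toMatrix'_id

lemma sub_dotProduct_self_eq_zero_of_symMat_Dmat {d : ℕ} {ψ : (Fin d → ℝ) → (Fin d → ℝ)}
    (hψ : Differentiable ℝ ψ) (hsym : ∀ x, symMat (Dmat ψ x) = 0) (x v : Fin d → ℝ) :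
    (ψ (x + v) - ψ x) ⬝ᵥ v = 0 := by
  have hderiv : ∀ t : ℝ, HasDerivAt (fun s : ℝ => ψ (x + s • v) ⬝ᵥ v) 0 t := by
    intro t
    have hline : HasDerivAt (fun s : ℝ => ψ (x + s • v)) (fderiv ℝ ψ (x + t • v) v) t :=
      (hψ _).hasFDerivAt.comp_hasDerivAt t
        (by simpa using ((hasDerivAt_id t).smul_const v).const_add x)
    rw [← dotProduct_mulVec_self_eq_zero_of_symMat_eq_zero (hsym (x + t • v)) v,
      ← fderiv_apply_eq_Dmat_mulVec]
    exact HasDerivAt.fun_sum fun i _ => (hasDerivAt_pi.1 hline i).mul_const (v i)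
  have := is_const_of_deriv_eq_zero (fun t => (hderiv t).differentiableAt)
    (fun t => (hderiv t).deriv) 1 0
  simpa [sub_dotProduct, sub_eq_zero] using this

section SkewIncrements

variable {ι : Type*} [Fintype ι] {ψ : (ι → ℝ) → (ι → ℝ)}

lemma sub_dotProduct_eq_neg_sub_dotProduct (h : ∀ x v, (ψ (x + v) - ψ x) ⬝ᵥ v = 0)
    (x u v : ι → ℝ) : (ψ (x + u) - ψ x) ⬝ᵥ v = -((ψ (x + v) - ψ x) ⬝ᵥ u) := by
  have h1 := h x (u + v)
  have h2 := h (x + u) v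
  have h3 := h (x + v) u
  rw [← add_assoc] at h1
  rw [add_right_comm] at h3
  simp only [sub_dotProduct, dotProduct_add] at h1 h2 h3 ⊢
  linarith

lemma eq_of_sub_dotProduct_self_eq_zero_of_isBounded
    (h : ∀ x v, (ψ (x + v) - ψ x) ⬝ᵥ v = 0) (hb : IsBounded (Set.range ψ)) (x y : ι → ℝ) :
    ψ y = ψ x := by
  set v := y - x
  set w := ψ (x + v) - ψ x
  have hline : IsBounded (Set.range fun t : ℝ => t * (w ⬝ᵥ w)) := by
    refine (hb.isCompact_closure.image (f := fun z => ψ x ⬝ᵥ v - z ⬝ᵥ v)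
      (by fun_prop)).isBounded.subset ?_
    rintro _ ⟨t, rfl⟩
    refine ⟨ψ (x + t • w), subset_closure ⟨_, rfl⟩, ?_⟩
    have := sub_dotProduct_eq_neg_sub_dotProduct h x (t • w) v
    rw [dotProduct_smul, smul_eq_mul, sub_dotProduct] at this
    linarith
  have hww : w ⬝ᵥ w = 0 := by
    by_contra hne
    exact NormedSpace.unbounded_univ ℝ ℝ
      (hline.subset fun s _ => ⟨s / (w ⬝ᵥ w), div_mul_cancel₀ s hne⟩)
  simpa [w, v, sub_eq_zero] using dotProduct_self_eq_zero.1 hww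

end SkewIncrements

lemma isBounded_range_of_intPeriodic {ι E : Type*} [Fintype ι] [PseudoMetricSpace E]
    {f : (ι → ℝ) → E} (hf : Continuous f)
    (hper : ∀ (y : ι → ℝ) (k : ι → ℤ), f (y + fun i => (k i : ℝ)) = f y) :
    IsBounded (Set.range f) := by
  refine ((isCompact_Icc (a := (0 : ι → ℝ)) (b := 1)).image hf).isBounded.subset ?_
  rintro _ ⟨y, rfl⟩
  refine ⟨fun i => Int.fract (y i),
    ⟨fun i => Int.fract_nonneg _, fun i => (Int.fract_lt_one _).le⟩, ?_⟩
  rw [← hper _ fun i => ⌊y i⌋]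
  congr 1
  funext i
  simp

lemma volume_Ycell (d : ℕ) : volume (Ycell d) = 1 := by
  rw [Ycell, volume_pi_pi]
  simp [Real.volume_Ico]

lemma setIntegral_Ycell_const {d : ℕ} {E : Type*} [NormedAddCommGroup E] [NormedSpace ℝ E]
    [CompleteSpace E] (c : E) : ∫ _ in Ycell d, c = c := by
  rw [setIntegral_const, measureReal_def, volume_Ycell, ENNReal.toReal_one, one_smul]

theorem stmt14_general {d : ℕ} (L : ℝ)
    (A : (Fin d → ℝ) → Matrix (Fin d) (Fin d) ℝ)
    (hAdet : ∀ y, 0 < (A y).det)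
    (a : (Fin d → ℝ) → (Fin d → ℝ))
    (hdiff : Differentiable ℝ a)
    (hDa : ∀ y, Dmat a y = A y)
    (hanti : AntilipschitzWith L.toNNReal a)
    (hbij : Function.Bijective a)
    (φ : (Fin d → ℝ) → (Fin d → ℝ)) (hφdiff : Differentiable ℝ φ)
    (hφper : ∀ (y : Fin d → ℝ) (k : Fin d → ℤ), φ (y + (fun i => (k i : ℝ))) = φ y)
    (hφmean : ∀ i, (∫ y in Ycell d, φ y i) = 0)
    (hsym : ∀ y, symMat (Dmat φ y * (A y)⁻¹) = 0) :
    ∀ y, φ y = 0 := by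
  set g := Function.surjInv hbij.2
  have hag : Function.RightInverse g a := Function.rightInverse_surjInv hbij.2
  have hg : Continuous g := (hanti.to_rightInverse hag).continuous
  have hψ : ∀ x, DifferentiableAt ℝ (φ ∘ g) x ∧ symMat (Dmat (φ ∘ g) x) = 0 := by
    intro x
    obtain ⟨hdg, hDg⟩ := differentiableAt_and_Dmat_of_rightInverse hg.continuousAt hag
      (hdiff _) (by rw [hDa]; exact (hAdet _).ne'.isUnit)
    refine ⟨(hφdiff _).comp x hdg, ?_⟩
    rw [Dmat_comp (hφdiff _) hdg, hDg, hDa]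
    exact hsym _
  have hψconst := eq_of_sub_dotProduct_self_eq_zero_of_isBounded
    (sub_dotProduct_self_eq_zero_of_symMat_Dmat (fun x => (hψ x).1) (fun x => (hψ x).2))
    ((isBounded_range_of_intPeriodic hφdiff.continuous hφper).subset
      (Set.range_comp_subset_range _ _))
  have hφconst : ∀ y, φ y = φ 0 := fun y => by
    simpa [g, Function.leftInverse_surjInv hbij _] using hψconst (a 0) (a y)
  intro y
  funext i
  have hmean := hφmean i
  simp_rw [hφconst, setIntegral_Ycell_const] at hmean
  rw [hφconst, hmean, Pi.zero_apply]

/-- Rigidity step of the periodic Korn inequality: let `A` be a periodic stress-free joint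
(`Y`-periodic, bounded with bounded inverse, positive determinant, `A = Da` for a Bilipschitz
homeomorphism `a` with `a 0 = 0`).  If `φ` is a `Y`-periodic map with zero mean over `Y`
satisfying `sym(Dφ · A⁻¹) = 0`, then `φ = 0`. -/
theorem stmt14 {d : ℕ} (L : ℝ) (hL : 1 ≤ L)
    (A : (Fin d → ℝ) → Matrix (Fin d) (Fin d) ℝ)
    (hper : ∀ (y : Fin d → ℝ) (k : Fin d → ℤ), A (y + (fun i => (k i : ℝ))) = A y)
    (hAbound : ∀ y, (∀ i j, |A y i j| ≤ L) ∧ (∀ i j, |(A y)⁻¹ i j| ≤ L))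
    (hAdet : ∀ y, 0 < (A y).det)
    (a : (Fin d → ℝ) → (Fin d → ℝ))
    (hcont : Continuous a) (ha0 : a 0 = 0) (hdiff : Differentiable ℝ a)
    (hDa : ∀ y, Dmat a y = A y)
    (hlip : LipschitzWith L.toNNReal a) (hanti : AntilipschitzWith L.toNNReal a)
    (hbij : Function.Bijective a)
    (φ : (Fin d → ℝ) → (Fin d → ℝ)) (hφdiff : Differentiable ℝ φ)
    (hφper : ∀ (y : Fin d → ℝ) (k : Fin d → ℤ), φ (y + (fun i => (k i : ℝ))) = φ y)
    (hφmean : ∀ i, (∫ y in Ycell d, φ y i) = 0)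
    (hsym : ∀ y, symMat (Dmat φ y * (A y)⁻¹) = 0) :
    ∀ y, φ y = 0 :=
  stmt14_general L A hAdet a hdiff hDa hanti hbij φ hφdiff hφper hφmean hsym
end

section
/- Let a : ℝ^d → ℝ^d be a continuous open map (images of open sets are open) that is injective almost everywhere, in the sense that for a.e. z ∈ ℝ^d the preimage a^{-1}{z} has at most one point. Then a is injective everywhere. -/
open MeasureTheory

/-! If `a x = a y` with `x ≠ y`, separate `x` and `y` by disjoint open sets `U` and `V`. Then
`a '' U ∩ a '' V` is an open neighbourhood of `a x`, hence has positive measure, yet every point of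
it has two distinct preimages, one in `U` and one in `V`. -/

theorem not_subsingleton_preimage_of_mem_image_inter_image {X Y : Type*} {a : X → Y}
    {U V : Set X} (hUV : Disjoint U V) {z : Y} (hz : z ∈ a '' U ∩ a '' V) :
    ¬ (a ⁻¹' {z}).Subsingleton := by
  obtain ⟨⟨u, hu, rfl⟩, ⟨v, hv, hvu⟩⟩ := hz
  intro hsub
  have huv : u = v := hsub rfl hvu
  exact hUV.ne_of_mem hu hv huv

theorem IsOpenMap.injective_of_ae_subsingleton_preimage {X Y : Type*} [TopologicalSpace X]
    [T2Space X] [TopologicalSpace Y] [MeasurableSpace Y] {μ : Measure Y} [μ.IsOpenPosMeasure]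
    {a : X → Y} (ha : IsOpenMap a) (hinj : ∀ᵐ z ∂μ, (a ⁻¹' {z}).Subsingleton) :
    Function.Injective a := by
  intro x y hxy
  by_contra hne
  obtain ⟨U, V, hU, hV, hxU, hyV, hUV⟩ := t2_separation hne
  have hO : IsOpen (a '' U ∩ a '' V) := (ha U hU).inter (ha V hV)
  have hax : a x ∈ a '' U ∩ a '' V := ⟨⟨x, hxU, rfl⟩, ⟨y, hyV, hxy.symm⟩⟩
  have hnull : μ (a '' U ∩ a '' V) = 0 :=
    measure_mono_null (fun z hz => not_subsingleton_preimage_of_mem_image_inter_image hUV hz)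
      (ae_iff.mp hinj)
  exact hO.measure_ne_zero μ ⟨_, hax⟩ hnull

theorem stmt19_general {d : ℕ} (a : (Fin d → ℝ) → (Fin d → ℝ))
    (hopen : IsOpenMap a)
    (hinj : ∀ᵐ z : Fin d → ℝ, (a ⁻¹' {z}).Subsingleton) :
    Function.Injective a :=
  hopen.injective_of_ae_subsingleton_preimage hinj

/-- A continuous open map `ℝ^d → ℝ^d` that is injective almost everywhere (for a.e. `z` the
fiber `a⁻¹{z}` has at most one point) is injective everywhere. -/
theorem stmt19 {d : ℕ} (a : (Fin d → ℝ) → (Fin d → ℝ))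
    (hcont : Continuous a) (hopen : IsOpenMap a)
    (hinj : ∀ᵐ z : Fin d → ℝ, (a ⁻¹' {z}).Subsingleton) :
    Function.Injective a :=
  stmt19_general a hopen hinj
end
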